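/- arXiv:0711.1516 — 2 statements merged into one kernel-verified Lean document; each statement's English description precedes it below -/
import Mathlib

section
/- Let X be a metrizable space. If for every metric d' on X generating the topology of X the metric space (X,d') is σ-totally bounded, then X has the Hurewicz property. -/
/-!
`X` is σ-totally bounded, hence separable, so every open cover has a subcover
`e n 0, e n 1, …`, and a partition of unity gives a continuous `g n : X → ℝ` with
`g n x ≤ N → x ∈ e n 0 ∪ … ∪ e n N`. Refining a compatible uniformity by the `g n` yields a
compatible metric in which every `g n` is uniformly continuous, hence bounded above on the totally
bounded pieces `S k` of `X` for that metric. If `M n` bounds `g n` on `S 0 ∪ … ∪ S n`, the finite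
families `e n 0, …, e n (M n)` witness the Hurewicz property.
-/

/-- A topological space `X` has the Hurewicz property if for each sequence of open covers
`U n` of `X` there is a sequence `V n` such that each `V n` is a finite subset of `U n` and
every point of `X` belongs to `⋃₀ V n` for all but finitely many `n`. -/
def HurewiczProperty (X : Type*) [TopologicalSpace X] : Prop :=
  ∀ U : ℕ → Set (Set X),
    (∀ n, (∀ S ∈ U n, IsOpen S) ∧ ⋃₀ U n = Set.univ) →
    ∃ V : ℕ → Set (Set X),
      (∀ n, (V n).Finite ∧ V n ⊆ U n) ∧
      ∀ x : X, ∀ᶠ n in Filter.atTop, x ∈ ⋃₀ V n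

open Set Filter Topology TopologicalSpace Uniformity

theorem secondCountableTopology_of_iUnion_totallyBounded {X : Type*} [UniformSpace X]
    [IsCountablyGenerated (𝓤 X)] {S : ℕ → Set X} (hS : ∀ n, TotallyBounded (S n))
    (hcover : ⋃ n, S n = univ) : SecondCountableTopology X := by
  have : SeparableSpace X := by
    rw [← isSeparable_univ_iff, ← hcover]
    exact .iUnion fun n => (hS n).isSeparable
  exact UniformSpace.secondCountable_of_separable X

theorem exists_seq_subcover {X : Type*} [TopologicalSpace X] [LindelofSpace X] [Nonempty X]
    {U : Set (Set X)} (hUo : ∀ s ∈ U, IsOpen s) (hU : ⋃₀ U = univ) :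
    ∃ e : ℕ → Set X, (∀ n, e n ∈ U) ∧ ⋃ n, e n = univ := by
  obtain ⟨T, hTU, hTc, hT⟩ := isLindelof_univ.elim_countable_subcover_image (c := id) hUo
    (by simpa [← sUnion_eq_biUnion] using hU.ge)
  have hTcover : ⋃₀ T = univ := by simpa [← sUnion_eq_biUnion] using hT
  obtain ⟨e, rfl⟩ := hTc.exists_eq_range (Nonempty.of_sUnion_eq_univ hTcover)
  exact ⟨e, fun n => hTU (mem_range_self n), by rwa [sUnion_range] at hTcover⟩

theorem exists_continuous_le_imp_mem_accumulate {X : Type*} [TopologicalSpace X] [NormalSpace X]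
    [ParacompactSpace X] {W : ℕ → Set X} (hWo : ∀ n, IsOpen (W n)) (hW : ⋃ n, W n = univ) :
    ∃ g : C(X, ℝ), ∀ x (N : ℕ), g x ≤ N → x ∈ accumulate W N := by
  have hupper (x : X) : IsUpperSet {r : ℝ | ∀ N : ℕ, r ≤ N → x ∈ accumulate W N} :=
    fun r s hrs hr N hsN => hr N (hrs.trans hsN)
  refine exists_continuous_forall_mem_convex_of_local_const
    (fun x => (hupper x).ordConnected.convex) fun x => ?_
  obtain ⟨n, hxn⟩ := mem_iUnion.1 (hW.symm ▸ mem_univ x)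
  exact ⟨n, eventually_of_mem ((hWo n).mem_nhds hxn) fun y hy N hnN =>
    mem_accumulate.2 ⟨n, by exact_mod_cast hnN, hy⟩⟩

theorem exists_metricSpace_uniformContinuous {X ι : Type*} [t : TopologicalSpace X]
    [MetrizableSpace X] [Countable ι] {Y : ι → Type*} [∀ i, UniformSpace (Y i)]
    [∀ i, IsCountablyGenerated (𝓤 (Y i))] {f : ∀ i, X → Y i} (hf : ∀ i, Continuous (f i)) :
    ∃ m : MetricSpace X, m.toUniformSpace.toTopologicalSpace = t ∧
      ∀ i, UniformContinuous[m.toUniformSpace, _] (f i) := by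
  have := pseudoMetrizableSpaceUniformity_countably_generated X
  let u : UniformSpace X :=
    pseudoMetrizableSpaceUniformity X ⊓ ⨅ i, UniformSpace.comap (f i) inferInstance
  have hu : u.toTopologicalSpace = t := by
    refine UniformSpace.toTopologicalSpace_inf.trans ?_
    rw [UniformSpace.toTopologicalSpace_iInf]
    exact inf_eq_left.2 (le_iInf fun i => (hf i).le_induced)
  have : IsCountablyGenerated 𝓤[u] := by
    rw [show 𝓤[u] = _ from inf_uniformity, iInf_uniformity]
    simp only [uniformity_comap]
    infer_instance
  have : @T0Space X u.toTopologicalSpace := hu ▸ inferInstance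
  exact ⟨@UniformSpace.metricSpace X u _ _, hu, fun i =>
    uniformContinuous_iff_le_comap.2 (inf_le_right.trans (iInf_le _ i))⟩

theorem exists_eventually_le_of_bddAbove {X : Type*} {f : ℕ → X → ℝ} {S : ℕ → Set X}
    (hbdd : ∀ n k, BddAbove (f n '' S k)) (hcover : ⋃ k, S k = univ) :
    ∃ M : ℕ → ℕ, ∀ x, ∀ᶠ n in atTop, f n x ≤ M n := by
  have hbdd_acc : ∀ n, BddAbove (f n '' accumulate S n) := fun n => by
    rw [accumulate_def, image_iUnion₂]
    exact (finite_Iic n).bddAbove_biUnion.2 fun k _ => hbdd n k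
  choose B hB using hbdd_acc
  refine ⟨fun n => ⌈B n⌉₊, fun x => ?_⟩
  obtain ⟨k, hxk⟩ := mem_iUnion.1 (hcover.symm ▸ mem_univ x)
  filter_upwards [eventually_ge_atTop k] with n hkn
  exact (hB n (mem_image_of_mem _ (mem_accumulate.2 ⟨k, hkn, hxk⟩))).trans (Nat.le_ceil _)

/-- If a metrizable space is σ-totally bounded in every metric generating its topology, then
it has the Hurewicz property. -/
theorem hurewicz_of_sigmaTotallyBounded_all_metrics
    {X : Type*} [t : TopologicalSpace X] [TopologicalSpace.MetrizableSpace X]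
    (h : ∀ m : MetricSpace X,
      m.toPseudoMetricSpace.toUniformSpace.toTopologicalSpace = t →
      ∃ S : ℕ → Set X,
        (∀ n, @TotallyBounded X m.toPseudoMetricSpace.toUniformSpace (S n)) ∧
        (⋃ n, S n) = Set.univ) :
    HurewiczProperty X := by
  intro U hU
  rcases isEmpty_or_nonempty X with hX | hX
  · exact ⟨fun _ => ∅, fun _ => ⟨finite_empty, empty_subset _⟩, fun x => isEmptyElim x⟩
  let m₀ := metrizableSpaceMetric X
  obtain ⟨S₀, hS₀, hS₀_cover⟩ := h m₀ rfl
  have := secondCountableTopology_of_iUnion_totallyBounded hS₀ hS₀_cover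
  choose e he_mem he_cover using fun n => exists_seq_subcover (hU n).1 (hU n).2
  choose g hg using fun n =>
    exists_continuous_le_imp_mem_accumulate (fun k => (hU n).1 _ (he_mem n k)) (he_cover n)
  obtain ⟨m, hm_top, hg_unif⟩ := exists_metricSpace_uniformContinuous fun n => (g n).continuous
  obtain ⟨S, hS, hS_cover⟩ := h m hm_top
  obtain ⟨M, hM⟩ := exists_eventually_le_of_bddAbove
    (fun n k => ((hS k).image (hg_unif n)).isBounded.bddAbove) hS_cover
  refine ⟨fun n => e n '' Iic (M n), fun n => ⟨(finite_Iic _).image _,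
    image_subset_iff.2 fun k _ => he_mem n k⟩, fun x => (hM x).mono fun n hn => ?_⟩
  obtain ⟨k, hk, hxk⟩ := mem_accumulate.1 (hg n x (M n) hn)
  exact ⟨e n k, mem_image_of_mem _ hk, hxk⟩
end

section
/- Let X be a separable metrizable space which has an F_σ subset C such that C (with the subspace topology) has the Hurewicz property, and for every open set U ⊆ X with C ⊆ U the set X\U is finite dimensional. Then X has property S_c(O,O) if and only if X has property S_c(O_fin,O). -/
/-- Property `S_c(O,O)`: for each sequence of open covers `U n` of `X` there is a sequence
`V n` of pairwise disjoint families of open sets, `V n` refining `U n`, whose union is a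
cover of `X`. -/
def ScOO (X : Type*) [TopologicalSpace X] : Prop :=
  ∀ U : ℕ → Set (Set X),
    (∀ n, (∀ S ∈ U n, IsOpen S) ∧ ⋃₀ U n = Set.univ) →
    ∃ V : ℕ → Set (Set X),
      (∀ n, (∀ S ∈ V n, IsOpen S) ∧ (V n).Pairwise Disjoint ∧
        ∀ S ∈ V n, ∃ T ∈ U n, S ⊆ T) ∧
      ⋃₀ (⋃ n, V n) = Set.univ

/-- Property `S_c(O_fin,O)`: for each sequence of finite open covers `U n` of `X` there is a
sequence `V n` of pairwise disjoint families of open sets, `V n` refining `U n`, whose union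
is a cover of `X`. -/
def ScOFinO (X : Type*) [TopologicalSpace X] : Prop :=
  ∀ U : ℕ → Set (Set X),
    (∀ n, (U n).Finite ∧ (∀ S ∈ U n, IsOpen S) ∧ ⋃₀ U n = Set.univ) →
    ∃ V : ℕ → Set (Set X),
      (∀ n, (∀ S ∈ V n, IsOpen S) ∧ (V n).Pairwise Disjoint ∧
        ∀ S ∈ V n, ∃ T ∈ U n, S ⊆ T) ∧
      ⋃₀ (⋃ n, V n) = Set.univ

/-- A space `Y` is finite dimensional (has finite covering dimension) if there is `n` such
that every finite open cover of `Y` has a finite open refinement covering `Y` in which each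
point of `Y` belongs to at most `n + 1` of the sets. -/
def FiniteCoveringDimension (Y : Type*) [TopologicalSpace Y] : Prop :=
  ∃ n : ℕ, ∀ U : Set (Set Y), U.Finite → (∀ S ∈ U, IsOpen S) → ⋃₀ U = Set.univ →
    ∃ V : Set (Set Y), V.Finite ∧ (∀ S ∈ V, IsOpen S) ∧ (∀ S ∈ V, ∃ T ∈ U, S ⊆ T) ∧
      ⋃₀ V = Set.univ ∧ ∀ y : Y, {S ∈ V | y ∈ S}.ncard ≤ n + 1

/-!
The Hurewicz property of `C`, applied to covers by open sets whose closures refine the given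
covers, yields closed sets `M N` covering `C` such that `M N` is covered by finitely many members
of every later cover. Adding `(M N)ᶜ` makes these finite covers, so `S_c(O_fin,O)` covers each
`M N`, and hence an open `G ⊇ C`, by disjoint refinements of the even-indexed covers.

The closed set `Gᶜ` is finite dimensional, and a finite-dimensional separable metric space has
`S_c(O,O)`. A finite open cover `(u i)` of order `≤ s` splits into `s` disjoint open families:
choose shrinkings `W 0 ⊆ closure (W 0) ⊆ W 1 ⊆ …` and take at level `k` the pieces
`⋂ i ∈ B, W k i \ ⋃ i ∉ B, closure (W k i)` with `#B = k + 1`. An arbitrary open cover is made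
finite on each ring `g ⁻¹' (r - 1, r + 1)`, where `g` is built from a partition of unity
subordinate to a countable subcover; rings of equal parity are disjoint, so `2 s` families
suffice, and a common refinement of `2 s` covers turns these into a selection. Disjoint
relatively open subsets of `Gᶜ` extend to disjoint open subsets of `X` (the points closer to `S`
than to `Gᶜ \ S`), which lifts the selection to the odd-indexed covers.
-/

open Set Function Topology

section Selection

variable {X : Type*} [TopologicalSpace X]

def IsOpenCover (𝒰 : Set (Set X)) : Prop :=
  (∀ S ∈ 𝒰, IsOpen S) ∧ ⋃₀ 𝒰 = univ

def IsDisjointOpenRefinement (𝒱 𝒰 : Set (Set X)) : Prop :=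
  (∀ S ∈ 𝒱, IsOpen S) ∧ 𝒱.Pairwise Disjoint ∧ ∀ S ∈ 𝒱, ∃ T ∈ 𝒰, S ⊆ T

/-- For a constant family `fun _ : κ => 𝒜` this says that `Z` is covered by `κ`-many disjoint
open families refining `𝒜`. -/
def HasDisjointSelection {ι : Type*} (𝒰 : ι → Set (Set X)) (Z : Set X) : Prop :=
  ∃ 𝒱 : ι → Set (Set X), (∀ i, IsDisjointOpenRefinement (𝒱 i) (𝒰 i)) ∧ Z ⊆ ⋃ i, ⋃₀ 𝒱 i

theorem IsOpenCover.exists_mem {𝒰 : Set (Set X)} (h : IsOpenCover 𝒰) (x : X) : ∃ T ∈ 𝒰, x ∈ T :=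
  mem_sUnion.1 (h.2 ▸ mem_univ x)

theorem scOO_iff :
    ScOO X ↔ ∀ 𝒰 : ℕ → Set (Set X), (∀ n, IsOpenCover (𝒰 n)) → HasDisjointSelection 𝒰 univ := by
  simp only [ScOO, HasDisjointSelection, IsOpenCover, IsDisjointOpenRefinement, univ_subset_iff,
    sUnion_iUnion]

theorem ScOO.scOFinO (h : ScOO X) : ScOFinO X :=
  fun U hU => h U fun n => (hU n).2

theorem isDisjointOpenRefinement_empty (𝒰 : Set (Set X)) : IsDisjointOpenRefinement ∅ 𝒰 :=
  ⟨by simp, pairwise_empty _, by simp⟩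

theorem IsDisjointOpenRefinement.trans {𝒱 𝒰 𝒲 : Set (Set X)} (h : IsDisjointOpenRefinement 𝒱 𝒰)
    (h' : ∀ S ∈ 𝒰, ∃ T ∈ 𝒲, S ⊆ T) : IsDisjointOpenRefinement 𝒱 𝒲 := by
  refine ⟨h.1, h.2.1, fun S hS => ?_⟩
  obtain ⟨T, hT, hST⟩ := h.2.2 S hS
  obtain ⟨T', hT', hTT'⟩ := h' T hT
  exact ⟨T', hT', hST.trans hTT'⟩

namespace HasDisjointSelection

variable {ι : Type*} {𝒰 : ι → Set (Set X)} {Z : Set X}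

theorem mono {Z' : Set X} (h : HasDisjointSelection 𝒰 Z) (hZ : Z' ⊆ Z) :
    HasDisjointSelection 𝒰 Z' :=
  let ⟨𝒱, h𝒱, hcov⟩ := h
  ⟨𝒱, h𝒱, hZ.trans hcov⟩

theorem of_refines {𝒲 : ι → Set (Set X)} (h : HasDisjointSelection 𝒰 Z)
    (h𝒰 : ∀ i, ∀ S ∈ 𝒰 i, ∃ T ∈ 𝒲 i, S ⊆ T) : HasDisjointSelection 𝒲 Z :=
  let ⟨𝒱, h𝒱, hcov⟩ := h
  ⟨𝒱, fun i => (h𝒱 i).trans (h𝒰 i), hcov⟩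

theorem of_insert {O : Set X} {𝒜 : ι → Set (Set X)}
    (h : HasDisjointSelection (fun i => insert O (𝒜 i)) Z) : HasDisjointSelection 𝒜 (Z \ O) := by
  obtain ⟨𝒱, h𝒱, hcov⟩ := h
  refine ⟨fun i => {S ∈ 𝒱 i | ∃ T ∈ 𝒜 i, S ⊆ T}, fun i => ⟨fun S hS => (h𝒱 i).1 S hS.1,
    (h𝒱 i).2.1.mono (sep_subset _ _), fun S hS => hS.2⟩, fun x ⟨hxZ, hxO⟩ => ?_⟩
  obtain ⟨i, S, hS, hxS⟩ : ∃ i, ∃ S ∈ 𝒱 i, x ∈ S := by simpa using hcov hxZ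
  obtain ⟨T, hT, hST⟩ := (h𝒱 i).2.2 S hS
  rcases hT with rfl | hT
  · exact absurd (hST hxS) hxO
  · exact mem_iUnion.2 ⟨i, S, ⟨hS, T, hT, hST⟩, hxS⟩

theorem of_comp {ι' : Type*} {𝒰 : ι' → Set (Set X)} {e : ι → ι'} (he : Injective e)
    (h : HasDisjointSelection (𝒰 ∘ e) Z) : HasDisjointSelection 𝒰 Z := by
  obtain ⟨𝒱, h𝒱, hcov⟩ := h
  refine ⟨extend e 𝒱 fun _ => ∅, fun j => ?_, hcov.trans fun x hx => ?_⟩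
  · by_cases hj : ∃ i, e i = j
    · obtain ⟨i, rfl⟩ := hj
      rw [he.extend_apply]
      exact h𝒱 i
    · rw [extend_apply' _ _ _ hj]
      exact isDisjointOpenRefinement_empty _
  · obtain ⟨i, hi⟩ := mem_iUnion.1 hx
    exact mem_iUnion.2 ⟨e i, by rwa [he.extend_apply]⟩

theorem iUnion {κ : Type*} {𝒰 : ℕ → Set (Set X)} {Z : κ → Set X} (e : κ → ℕ → ℕ)
    (he : Injective (uncurry e)) (h : ∀ k, HasDisjointSelection (fun j => 𝒰 (e k j)) (Z k)) :
    HasDisjointSelection 𝒰 (⋃ k, Z k) := by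
  choose 𝒱 h𝒱 hcov using h
  refine of_comp he ⟨uncurry 𝒱, fun p => h𝒱 p.1 p.2, iUnion_subset fun k => (hcov k).trans ?_⟩
  exact iUnion_subset fun j => subset_iUnion (fun p => ⋃₀ uncurry 𝒱 p) (k, j)

theorem union {𝒰 : ℕ → Set (Set X)} {Z₁ Z₂ : Set X}
    (h₁ : HasDisjointSelection (fun n => 𝒰 (2 * n)) Z₁)
    (h₂ : HasDisjointSelection (fun n => 𝒰 (2 * n + 1)) Z₂) :
    HasDisjointSelection 𝒰 (Z₁ ∪ Z₂) := by
  rw [union_eq_iUnion]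
  refine iUnion (fun b n => cond b (2 * n) (2 * n + 1)) ?_ (Bool.forall_bool.2 ⟨h₂, h₁⟩)
  rintro ⟨_ | _, m⟩ ⟨_ | _, n⟩ h <;> simp only [uncurry_apply_pair, cond_false, cond_true] at h <;>
    simp <;> omega

theorem exists_isOpen_superset (h : HasDisjointSelection 𝒰 Z) :
    ∃ W, IsOpen W ∧ Z ⊆ W ∧ HasDisjointSelection 𝒰 W :=
  let ⟨𝒱, h𝒱, hcov⟩ := h
  ⟨_, isOpen_iUnion fun i => isOpen_sUnion (h𝒱 i).1, hcov, 𝒱, h𝒱, subset_rfl⟩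

end HasDisjointSelection

end Selection

section CommonRefinement

variable {X : Type*} [TopologicalSpace X]

theorem exists_isOpenCover_refining_all {κ : Type*} [Finite κ] {𝒰 : κ → Set (Set X)}
    (h𝒰 : ∀ c, IsOpenCover (𝒰 c)) :
    ∃ 𝒜, IsOpenCover 𝒜 ∧ ∀ c, ∀ S ∈ 𝒜, ∃ T ∈ 𝒰 c, S ⊆ T := by
  refine ⟨range fun f : {f : κ → Set X // ∀ c, f c ∈ 𝒰 c} => ⋂ c, f.1 c, ⟨?_, ?_⟩, ?_⟩
  · rintro _ ⟨f, rfl⟩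
    exact isOpen_iInter_of_finite fun c => (h𝒰 c).1 _ (f.2 c)
  · refine eq_univ_of_forall fun x => ?_
    choose f hf hxf using fun c => (h𝒰 c).exists_mem x
    exact ⟨_, ⟨⟨f, hf⟩, rfl⟩, mem_iInter.2 hxf⟩
  · rintro c _ ⟨f, rfl⟩
    exact ⟨f.1 c, f.2 c, iInter_subset _ c⟩

theorem scOO_of_forall_hasDisjointSelection {κ : Type*} [Finite κ]
    (h : ∀ 𝒜, IsOpenCover 𝒜 → HasDisjointSelection (fun _ : κ => 𝒜) (univ : Set X)) :
    ScOO X := by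
  refine scOO_iff.2 fun 𝒰 h𝒰 => ?_
  obtain ⟨e, he⟩ := Countable.exists_injective_nat κ
  obtain ⟨𝒜, h𝒜, h𝒜𝒰⟩ := exists_isOpenCover_refining_all fun c => h𝒰 (e c)
  exact ((h 𝒜 h𝒜).of_refines h𝒜𝒰).of_comp he

end CommonRefinement

section Order

variable {X : Type*} [TopologicalSpace X]

theorem exists_nested_shrinkings [NormalSpace X] {ι : Type*} [Finite ι] {u : ι → Set X}
    (hu : ∀ i, IsOpen (u i)) (hcov : ⋃ i, u i = univ) :
    ∃ W : ℕ → ι → Set X, (∀ k i, IsOpen (W k i)) ∧ ⋃ i, W 0 i = univ ∧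
      (∀ k i, closure (W k i) ⊆ W (k + 1) i) ∧ ∀ k i, closure (W k i) ⊆ u i := by
  obtain ⟨v, hvcov, hvo, hvu⟩ := exists_iUnion_eq_closure_subset hu (fun _ => toFinite _) hcov
  have step : ∀ i (V : {V : Set X // IsOpen V ∧ closure V ⊆ u i}),
      ∃ V' : {V : Set X // IsOpen V ∧ closure V ⊆ u i}, closure V.1 ⊆ V'.1 := fun i V =>
    let ⟨V', hV'o, hVV', hV'u⟩ := normal_exists_closure_subset isClosed_closure (hu i) V.2.2
    ⟨⟨V', hV'o, hV'u⟩, hVV'⟩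
  choose next hnext using step
  let W (k : ℕ) (i : ι) := (next i)^[k] ⟨v i, hvo i, hvu i⟩
  refine ⟨fun k i => (W k i).1, fun k i => (W k i).2.1, hvcov, fun k i => ?_,
    fun k i => (W k i).2.2⟩
  simpa only [W, iterate_succ_apply'] using hnext i (W k i)

section CoverPiece

variable {ι : Type*} {W : ι → Set X}

def coverPiece (W : ι → Set X) (B : Set ι) : Set X :=
  (⋂ i ∈ B, W i) \ ⋃ (i) (_ : i ∉ B), closure (W i)

theorem isOpen_coverPiece [Finite ι] (hW : ∀ i, IsOpen (W i)) (B : Set ι) :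
    IsOpen (coverPiece W B) :=
  ((toFinite B).isOpen_biInter fun i _ => hW i).sdiff
    (isClosed_iUnion_of_finite fun _ => isClosed_iUnion_of_finite fun _ => isClosed_closure)

theorem coverPiece_subset {B : Set ι} {i : ι} (hi : i ∈ B) : coverPiece W B ⊆ W i :=
  sdiff_subset.trans (biInter_subset_of_mem hi)

theorem disjoint_coverPiece [Finite ι] {B B' : Set ι} (hcard : B.ncard = B'.ncard)
    (hne : B ≠ B') : Disjoint (coverPiece W B) (coverPiece W B') := by
  obtain ⟨i, hiB', hiB⟩ : ∃ i ∈ B', i ∉ B :=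
    not_subset.1 fun h => hne (eq_of_subset_of_ncard_le h hcard.le).symm
  refine disjoint_left.2 fun x hx hx' => hx.2 ?_
  exact mem_iUnion₂.2 ⟨i, hiB, subset_closure (coverPiece_subset hiB' hx')⟩

theorem mem_coverPiece_setOf [Finite ι] {x : X}
    (h : {i | x ∈ closure (W i)}.ncard ≤ {i | x ∈ W i}.ncard) :
    x ∈ coverPiece W {i | x ∈ W i} := by
  have heq := eq_of_subset_of_ncard_le (fun i (hi : x ∈ W i) => subset_closure (s := W i) hi) h
  refine ⟨mem_iInter₂.2 fun i hi => hi, fun hx => ?_⟩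
  obtain ⟨i, hiB, hxi⟩ := mem_iUnion₂.1 hx
  exact hiB (heq ▸ hxi)

end CoverPiece

/-- Applied to the numbers `n k ≤ c k` of sets `W k i`, resp. `closure (W k i)`, containing a
point, the level `k` found puts the point in the `coverPiece` of size `k + 1` at that level. -/
theorem exists_eq_succ_of_interleaved {n c : ℕ → ℕ} {s : ℕ} (hnc : ∀ k, n k ≤ c k)
    (hcn : ∀ k, c k ≤ n (k + 1)) (hn0 : 1 ≤ n 0) (hcs : ∀ k, c k ≤ s) :
    ∃ k, n k = k + 1 ∧ c k = k + 1 := by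
  have hex : ∃ k, c k ≤ k + 1 := ⟨s, (hcs s).trans (Nat.le_succ s)⟩
  refine ⟨Nat.find hex, ?_⟩
  have hle := Nat.find_spec hex
  have hge : Nat.find hex + 1 ≤ n (Nat.find hex) := by
    cases hk : Nat.find hex with
    | zero => exact hn0
    | succ k =>
      have hmin := Nat.find_min hex (show k < Nat.find hex by omega)
      have := hcn k
      omega
  have := hnc (Nat.find hex)
  omega

theorem exists_mem_coverPiece {ι : Type*} [Finite ι] {u : ι → Set X} {W : ℕ → ι → Set X}
    (hW0 : ⋃ i, W 0 i = univ) (hWW : ∀ k i, closure (W k i) ⊆ W (k + 1) i)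
    (hWu : ∀ k i, closure (W k i) ⊆ u i) {s : ℕ} (hord : ∀ x, {i | x ∈ u i}.ncard ≤ s) (x : X) :
    ∃ k < s, {i | x ∈ W k i}.ncard = k + 1 ∧ x ∈ coverPiece (W k) {i | x ∈ W k i} := by
  have hcs : ∀ k, {i | x ∈ closure (W k i)}.ncard ≤ s := fun k =>
    (ncard_le_ncard fun i hi => hWu k i hi).trans (hord x)
  obtain ⟨k, hnk, hck⟩ := exists_eq_succ_of_interleaved
    (n := fun k => {i | x ∈ W k i}.ncard) (c := fun k => {i | x ∈ closure (W k i)}.ncard)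
    (fun k => ncard_le_ncard fun i hi => subset_closure hi)
    (fun k => ncard_le_ncard fun i hi => hWW k i hi)
    ((ncard_pos).2 (mem_iUnion.1 (hW0.symm ▸ mem_univ x))) hcs
  have := hcs k
  exact ⟨k, by omega, hnk, mem_coverPiece_setOf (hck.trans hnk.symm).le⟩

theorem hasDisjointSelection_of_order_le [NormalSpace X] {ι : Type*} [Finite ι] {u : ι → Set X}
    (hu : ∀ i, IsOpen (u i)) (hcov : ⋃ i, u i = univ) {s : ℕ}
    (hord : ∀ x, {i | x ∈ u i}.ncard ≤ s) :
    HasDisjointSelection (fun _ : Fin s => range u) univ := by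
  obtain ⟨W, hWo, hW0, hWW, hWu⟩ := exists_nested_shrinkings hu hcov
  refine ⟨fun j => coverPiece (W j) '' {B | B.ncard = j + 1}, fun j => ⟨?_, ?_, ?_⟩,
    fun x _ => ?_⟩
  · rintro _ ⟨B, -, rfl⟩
    exact isOpen_coverPiece (hWo j) B
  · rintro _ ⟨B, hB, rfl⟩ _ ⟨B', hB', rfl⟩ hne
    exact disjoint_coverPiece (hB.trans hB'.symm) (by rintro rfl; exact hne rfl)
  · rintro _ ⟨B, hB, rfl⟩
    obtain ⟨i, hi⟩ := nonempty_of_ncard_ne_zero (by rw [show B.ncard = j + 1 from hB]; omega)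
    exact ⟨u i, mem_range_self i, (coverPiece_subset hi).trans (subset_closure.trans (hWu j i))⟩
  · obtain ⟨k, hks, hcard, hx⟩ := exists_mem_coverPiece hW0 hWW hWu hord x
    exact mem_iUnion.2 ⟨⟨k, hks⟩, _, ⟨_, hcard, rfl⟩, hx⟩

theorem FiniteCoveringDimension.exists_hasDisjointSelection [NormalSpace X]
    (h : FiniteCoveringDimension X) :
    ∃ k, ∀ 𝒜 : Set (Set X), 𝒜.Finite → IsOpenCover 𝒜 →
      HasDisjointSelection (fun _ : Fin k => 𝒜) univ := by
  obtain ⟨n, hn⟩ := h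
  refine ⟨n + 1, fun 𝒜 hfin h𝒜 => ?_⟩
  obtain ⟨𝒱, h𝒱fin, h𝒱o, h𝒱𝒜, h𝒱cov, h𝒱ord⟩ := hn 𝒜 hfin h𝒜.1 h𝒜.2
  have := h𝒱fin.to_subtype
  have hsel := hasDisjointSelection_of_order_le (u := ((↑) : 𝒱 → Set X)) (fun S => h𝒱o S S.2)
    (by rwa [← sUnion_eq_iUnion]) (s := n + 1) fun x => by
      have : {S : 𝒱 | x ∈ (S : Set X)} = Subtype.val ⁻¹' {S ∈ 𝒱 | x ∈ S} := by
        ext S; simp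
      rw [this, ncard_preimage_of_injective_subset_range Subtype.val_injective
        fun S hS => ⟨⟨S, hS.1⟩, rfl⟩]
      exact h𝒱ord x
  rw [Subtype.range_coe] at hsel
  exact hsel.of_refines fun _ => h𝒱𝒜

end Order

section Rings

variable {X : Type*} [TopologicalSpace X]

/-- Take `g = ∑ᶠ i, f i • e i` for a partition of unity `f` subordinate to `A`: at
the points outside every `A i` with `e i ≤ r`, all weights `e i` carried by `f` exceed `r`. -/
theorem exists_continuous_lt_imp_mem [NormalSpace X] [ParacompactSpace X] {ι : Type*}
    {A : ι → Set X} (hA : ∀ i, IsOpen (A i)) (hcov : ⋃ i, A i = univ) (e : ι → ℕ) :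
    ∃ g : X → ℝ, Continuous g ∧ (∀ x, 0 ≤ g x) ∧
      ∀ x (r : ℕ), g x < r + 1 → ∃ i, e i ≤ r ∧ x ∈ A i := by
  obtain ⟨f, hf⟩ := PartitionOfUnity.exists_isSubordinate isClosed_univ A hA hcov.ge
  refine ⟨fun x => ∑ᶠ i, f i x • (e i : ℝ),
    f.continuous_finsum_smul fun i _ _ => continuousAt_const,
    fun x => finsum_nonneg fun i => smul_nonneg (f.nonneg i x) (Nat.cast_nonneg _),
    fun x r hx => ?_⟩
  by_contra! h
  have hle : ∀ i, f i x • ((r : ℝ) + 1) ≤ f i x • (e i : ℝ) := fun i => by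
    by_cases hxi : x ∈ A i
    · have : r < e i := by
        by_contra! hei
        exact h i hei hxi
      exact smul_le_smul_of_nonneg_left (by exact_mod_cast this) (f.nonneg i x)
    · rw [image_eq_zero_of_notMem_tsupport fun hx => hxi (hf i hx), zero_smul, zero_smul]
  have hfin : (support fun i => f i x).Finite := f.locallyFinite.point_finite x
  have hsum : ∑ᶠ i, f i x • ((r : ℝ) + 1) ≤ ∑ᶠ i, f i x • (e i : ℝ) :=
    finsum_le_finsum' (hfin.subset fun _ => left_ne_zero_of_smul)
      (hfin.subset fun _ => left_ne_zero_of_smul) hle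
  rw [← finsum_smul, f.sum_eq_one (mem_univ x), one_smul] at hsum
  linarith

theorem exists_ring_cover [NormalSpace X] [ParacompactSpace X] {ι : Type*} {A : ι → Set X}
    (hA : ∀ i, IsOpen (A i)) (hcov : ⋃ i, A i = univ) (e : ι → ℕ) :
    ∃ R : ℕ → Set X, (∀ r, IsOpen (R r)) ∧ ⋃ r, R r = univ ∧
      (∀ r r', r + 2 ≤ r' → Disjoint (R r) (R r')) ∧
      ∀ r, closure (R r) ⊆ ⋃ (i) (_ : e i ≤ r + 1), A i := by
  obtain ⟨g, hg, hg0, hgA⟩ := exists_continuous_lt_imp_mem hA hcov e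
  refine ⟨fun r => g ⁻¹' Ioo ((r : ℝ) - 1) (r + 1), fun r => isOpen_Ioo.preimage hg, ?_, ?_, ?_⟩
  · refine eq_univ_of_forall fun x => mem_iUnion.2 ⟨⌊g x⌋₊, ?_, Nat.lt_floor_add_one (g x)⟩
    linarith [Nat.floor_le (hg0 x)]
  · intro r r' h
    refine disjoint_left.2 fun x hx hx' => ?_
    have : (r : ℝ) + 2 ≤ r' := by exact_mod_cast h
    linarith [hx.2, hx'.1]
  · intro r
    refine (closure_minimal (preimage_mono Ioo_subset_Icc_self)
      (isClosed_Icc.preimage hg)).trans fun x hx => ?_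
    obtain ⟨i, hi, hxi⟩ := hgA x (r + 1) (by push_cast; linarith [hx.2])
    exact mem_iUnion₂.2 ⟨i, hi, hxi⟩

theorem hasDisjointSelection_of_rings {κ : Type*} {𝒜 : Set (Set X)} {R : ℕ → Set X}
    (hRo : ∀ r, IsOpen (R r)) (hRcov : ⋃ r, R r = univ)
    (hRdisj : ∀ r r', r + 2 ≤ r' → Disjoint (R r) (R r'))
    (h : ∀ r, HasDisjointSelection (fun _ : κ => 𝒜) (R r)) :
    HasDisjointSelection (fun _ : Fin 2 × κ => 𝒜) univ := by
  choose ℰ hℰ hRℰ using h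
  refine ⟨fun p => {S | ∃ r : ℕ, r % 2 = (p.1 : ℕ) ∧ ∃ T ∈ ℰ r p.2, T ∩ R r = S},
    fun p => ⟨?_, ?_, ?_⟩, fun x _ => ?_⟩
  · rintro _ ⟨r, -, T, hT, rfl⟩
    exact ((hℰ r p.2).1 T hT).inter (hRo r)
  · rintro _ ⟨r, hr, T, hT, rfl⟩ _ ⟨r', hr', T', hT', rfl⟩ hne
    obtain rfl | hrr' := eq_or_ne r r'
    · have hTT' : T ≠ T' := by rintro rfl; exact hne rfl
      exact ((hℰ r p.2).2.1 hT hT' hTT').mono inter_subset_left inter_subset_left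
    · refine Disjoint.mono inter_subset_right inter_subset_right ?_
      rcases hrr'.lt_or_gt with h | h
      · exact hRdisj r r' (by omega)
      · exact (hRdisj r' r (by omega)).symm
  · rintro _ ⟨r, -, T, hT, rfl⟩
    obtain ⟨T', hT', hTT'⟩ := (hℰ r p.2).2.2 T hT
    exact ⟨T', hT', inter_subset_left.trans hTT'⟩
  · obtain ⟨r, hxr⟩ := mem_iUnion.1 (hRcov.symm ▸ mem_univ x)
    obtain ⟨c, T, hT, hxT⟩ : ∃ c, ∃ T ∈ ℰ r c, x ∈ T := by simpa using hRℰ r hxr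
    exact mem_iUnion.2
      ⟨(⟨r % 2, Nat.mod_lt r two_pos⟩, c), T ∩ R r, ⟨r, rfl, T, hT, rfl⟩, hxT, hxr⟩

theorem hasDisjointSelection_fin_two_prod_of_finite [NormalSpace X] [ParacompactSpace X]
    [SecondCountableTopology X] {κ : Type*}
    (h : ∀ 𝒜 : Set (Set X), 𝒜.Finite → IsOpenCover 𝒜 →
      HasDisjointSelection (fun _ : κ => 𝒜) univ)
    {𝒜 : Set (Set X)} (h𝒜 : IsOpenCover 𝒜) :
    HasDisjointSelection (fun _ : Fin 2 × κ => 𝒜) univ := by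
  obtain ⟨𝒜', h𝒜'c, h𝒜'𝒜, h𝒜'cov⟩ := TopologicalSpace.isOpen_sUnion_countable 𝒜 h𝒜.1
  have := h𝒜'c.to_subtype
  obtain ⟨e, he⟩ := Countable.exists_injective_nat 𝒜'
  obtain ⟨R, hRo, hRcov, hRdisj, hRA⟩ := exists_ring_cover (A := ((↑) : 𝒜' → Set X))
    (fun S => h𝒜.1 S (h𝒜'𝒜 S.2)) (by rw [← sUnion_eq_iUnion, h𝒜'cov, h𝒜.2]) e
  refine hasDisjointSelection_of_rings hRo hRcov hRdisj fun r => ?_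
  set 𝒞 : Set (Set X) := (↑) '' {S : 𝒜' | e S ≤ r + 1}
  have h𝒞 : 𝒞.Finite := ((finite_Iic (r + 1)).preimage he.injOn).image _
  have hcov : IsOpenCover (insert (closure (R r))ᶜ 𝒞) := by
    refine ⟨?_, eq_univ_of_forall fun x => ?_⟩
    · rintro S (rfl | ⟨S, -, rfl⟩)
      · exact isClosed_closure.isOpen_compl
      · exact h𝒜.1 S (h𝒜'𝒜 S.2)
    · by_cases hx : x ∈ closure (R r)
      · obtain ⟨S, hS, hxS⟩ := mem_iUnion₂.1 (hRA r hx)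
        exact ⟨S, mem_insert_of_mem _ ⟨S, hS, rfl⟩, hxS⟩
      · exact ⟨_, mem_insert _ _, hx⟩
  refine ((h _ (h𝒞.insert _) hcov).of_insert.mono fun x hx =>
    ⟨mem_univ x, not_not.2 (subset_closure hx)⟩).of_refines fun _ S hS => ?_
  obtain ⟨S, -, rfl⟩ := hS
  exact ⟨S, h𝒜'𝒜 S.2, subset_rfl⟩

theorem FiniteCoveringDimension.scOO [NormalSpace X] [ParacompactSpace X]
    [SecondCountableTopology X] (h : FiniteCoveringDimension X) : ScOO X := by
  obtain ⟨k, hk⟩ := h.exists_hasDisjointSelection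
  exact scOO_of_forall_hasDisjointSelection fun 𝒜 h𝒜 =>
    hasDisjointSelection_fin_two_prod_of_finite hk h𝒜

end Rings

section Extension

open Metric

variable {X : Type*} [PseudoEMetricSpace X]

def openExtension (Z S : Set X) : Set X :=
  {x | infEDist x S < infEDist x (Z \ S)}

theorem isOpen_openExtension (Z S : Set X) : IsOpen (openExtension Z S) :=
  isOpen_lt continuous_infEDist continuous_infEDist

theorem inter_subset_openExtension {Z O : Set X} (hO : IsOpen O) :
    Z ∩ O ⊆ openExtension Z (Z ∩ O) := fun x hx => by
  rw [openExtension, mem_ofPred_eq, infEDist_zero_of_mem hx, infEDist_pos_iff_notMem_closure]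
  exact fun hcl => closure_minimal (fun y hy hyO => hy.2 ⟨hy.1, hyO⟩) hO.isClosed_compl hcl hx.2

theorem disjoint_openExtension {Z S T : Set X} (hS : S ⊆ Z) (hT : T ⊆ Z) (hST : Disjoint S T) :
    Disjoint (openExtension Z S) (openExtension Z T) := by
  refine disjoint_left.2 fun x hxS hxT => ?_
  have h₁ : infEDist x (Z \ S) ≤ infEDist x T :=
    infEDist_anti fun y hy => ⟨hT hy, disjoint_right.1 hST hy⟩
  have h₂ : infEDist x (Z \ T) ≤ infEDist x S :=
    infEDist_anti fun y hy => ⟨hS hy, disjoint_left.1 hST hy⟩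
  exact lt_irrefl _ (((hxS.trans_le h₁).trans hxT).trans_le h₂)

theorem ScOO.hasDisjointSelection {Z : Set X} (hZ : ScOO Z) {𝒰 : ℕ → Set (Set X)}
    (h𝒰 : ∀ n, IsOpenCover (𝒰 n)) : HasDisjointSelection 𝒰 Z := by
  have h𝒰Z : ∀ n, IsOpenCover ((Subtype.val ⁻¹' ·) '' 𝒰 n : Set (Set Z)) := fun n => by
    refine ⟨?_, eq_univ_of_forall fun x => ?_⟩
    · rintro _ ⟨T, hT, rfl⟩
      exact ((h𝒰 n).1 T hT).preimage continuous_subtype_val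
    · obtain ⟨T, hT, hxT⟩ := (h𝒰 n).exists_mem x
      exact ⟨_, ⟨T, hT, rfl⟩, hxT⟩
  obtain ⟨𝒱, h𝒱, hcov⟩ := scOO_iff.1 hZ _ h𝒰Z
  have hT : ∀ n, ∀ S ∈ 𝒱 n, ∃ T ∈ 𝒰 n, S ⊆ Subtype.val ⁻¹' T := fun n S hS => by
    obtain ⟨_, ⟨T, hT, rfl⟩, hST⟩ := (h𝒱 n).2.2 S hS
    exact ⟨T, hT, hST⟩
  choose! T hT hST using hT
  refine ⟨fun n => (fun S => openExtension Z (Subtype.val '' S) ∩ T n S) '' 𝒱 n,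
    fun n => ⟨?_, ?_, ?_⟩, fun x hx => ?_⟩
  · rintro _ ⟨S, hS, rfl⟩
    exact (isOpen_openExtension _ _).inter ((h𝒰 n).1 _ (hT n S hS))
  · rintro _ ⟨S, hS, rfl⟩ _ ⟨S', hS', rfl⟩ hne
    have hSS' : S ≠ S' := by rintro rfl; exact hne rfl
    refine (disjoint_openExtension (Subtype.coe_image_subset Z S)
      (Subtype.coe_image_subset Z S') ?_).mono inter_subset_left inter_subset_left
    exact (disjoint_image_iff Subtype.val_injective).2 ((h𝒱 n).2.1 hS hS' hSS')
  · rintro _ ⟨S, hS, rfl⟩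
    exact ⟨T n S, hT n S hS, inter_subset_right⟩
  · obtain ⟨n, S, hS, hxS⟩ : ∃ n, ∃ S ∈ 𝒱 n, (⟨x, hx⟩ : Z) ∈ S := by
      simpa using hcov (mem_univ ⟨x, hx⟩)
    refine mem_iUnion.2 ⟨n, _, ⟨S, hS, rfl⟩, ?_, hST n S hS hxS⟩
    obtain ⟨O, hO, rfl⟩ := isOpen_induced_iff.1 ((h𝒱 n).1 S hS)
    rw [Subtype.image_preimage_coe]
    exact inter_subset_openExtension hO ⟨hx, hxS⟩

end Extension

section Hurewicz

variable {X : Type*} [TopologicalSpace X]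

theorem exists_finite_subset_closure_sUnion_subset {𝒰 𝓑 : Set (Set X)} (h𝓑 : 𝓑.Finite)
    (h : ∀ B ∈ 𝓑, ∃ T ∈ 𝒰, closure B ⊆ T) : ∃ 𝓕 ⊆ 𝒰, 𝓕.Finite ∧ closure (⋃₀ 𝓑) ⊆ ⋃₀ 𝓕 := by
  have := h𝓑.to_subtype
  choose T hT hBT using fun B : 𝓑 => h B B.2
  refine ⟨range T, range_subset_iff.2 hT, finite_range T, ?_⟩
  rw [h𝓑.closure_sUnion]
  exact iUnion₂_subset fun B hB => (hBT ⟨B, hB⟩).trans (subset_sUnion_of_mem (mem_range_self _))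

/-- `M N` intersects, over `n ≥ N`, the closures of the finite unions selected by the Hurewicz
property of `C` from covers by open sets with closures inside members of `𝒰 n`. -/
theorem HurewiczProperty.exists_isClosed_cover [RegularSpace X] {C : Set X}
    (hC : HurewiczProperty C) {𝒰 : ℕ → Set (Set X)} (h𝒰 : ∀ n, IsOpenCover (𝒰 n)) :
    ∃ M : ℕ → Set X, (∀ N, IsClosed (M N)) ∧ C ⊆ ⋃ N, M N ∧
      ∀ N n, N ≤ n → ∃ 𝓕 ⊆ 𝒰 n, 𝓕.Finite ∧ M N ⊆ ⋃₀ 𝓕 := by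
  set 𝒰' : ℕ → Set (Set X) := fun n => {B | IsOpen B ∧ ∃ T ∈ 𝒰 n, closure B ⊆ T}
  obtain ⟨V, hV, hev⟩ := hC (fun n => (Subtype.val ⁻¹' · : Set X → Set C) '' 𝒰' n) fun n => by
    refine ⟨?_, eq_univ_of_forall fun x => ?_⟩
    · rintro _ ⟨B, hB, rfl⟩
      exact hB.1.preimage continuous_subtype_val
    · obtain ⟨T, hT, hxT⟩ := (h𝒰 n).exists_mem x
      obtain ⟨B, ⟨hxB, hB⟩, hBT⟩ := (hasBasis_opens_closure (x : X)).mem_iff.1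
        (((h𝒰 n).1 T hT).mem_nhds hxT)
      exact ⟨_, ⟨B, ⟨hB, T, hT, hBT⟩, rfl⟩, hxB⟩
  choose 𝓑 h𝓑 h𝓑fin hV𝓑 using fun n =>
    exists_subset_image_finite_and.1 ⟨V n, (hV n).2, (hV n).1, rfl⟩
  refine ⟨fun N => ⋂ (n) (_ : N ≤ n), closure (⋃₀ 𝓑 n),
    fun N => isClosed_biInter fun n _ => isClosed_closure, fun x hx => ?_, fun N n hn => ?_⟩
  · obtain ⟨N, hN⟩ := Filter.eventually_atTop.1 (hev ⟨x, hx⟩)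
    refine mem_iUnion.2 ⟨N, mem_iInter₂.2 fun n hn => subset_closure ?_⟩
    obtain ⟨_, hS, hxS⟩ := hN n hn
    rw [hV𝓑 n] at hS
    obtain ⟨B, hB, rfl⟩ := hS
    exact ⟨B, hB, hxS⟩
  · obtain ⟨𝓕, h𝓕, h𝓕fin, h𝓕cov⟩ :=
      exists_finite_subset_closure_sUnion_subset (h𝓑fin n) fun B hB => (h𝓑 n hB).2
    exact ⟨𝓕, h𝓕, h𝓕fin, (biInter_subset_of_mem hn).trans h𝓕cov⟩

theorem ScOFinO.hasDisjointSelection_of_isClosed (hX : ScOFinO X) {𝒰 : ℕ → Set (Set X)}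
    (h𝒰 : ∀ n, ∀ S ∈ 𝒰 n, IsOpen S) {M : Set X} (hM : IsClosed M)
    (hfin : ∀ n, ∃ 𝓕 ⊆ 𝒰 n, 𝓕.Finite ∧ M ⊆ ⋃₀ 𝓕) : HasDisjointSelection 𝒰 M := by
  choose 𝓕 h𝓕 h𝓕fin hM𝓕 using hfin
  have hcov : ∀ n, IsOpenCover (insert Mᶜ (𝓕 n)) := fun n => by
    refine ⟨?_, eq_univ_of_forall fun x => ?_⟩
    · rintro S (rfl | hS)
      · exact hM.isOpen_compl
      · exact h𝒰 n S (h𝓕 n hS)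
    · by_cases hx : x ∈ M
      · obtain ⟨S, hS, hxS⟩ := hM𝓕 n hx
        exact ⟨S, mem_insert_of_mem _ hS, hxS⟩
      · exact ⟨Mᶜ, mem_insert _ _, hx⟩
  obtain ⟨𝒱, h𝒱, h𝒱cov⟩ := hX _ fun n => ⟨(h𝓕fin n).insert _, hcov n⟩
  have hsel : HasDisjointSelection (fun n => insert Mᶜ (𝓕 n)) univ :=
    ⟨𝒱, h𝒱, by rw [← sUnion_iUnion, h𝒱cov]⟩
  exact (hsel.of_insert.mono fun x hx => ⟨mem_univ x, not_not.2 hx⟩).of_refines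
    fun n S hS => ⟨S, h𝓕 n hS, subset_rfl⟩

theorem ScOFinO.exists_isOpen_superset_hasDisjointSelection [RegularSpace X] (hX : ScOFinO X)
    {C : Set X} (hC : HurewiczProperty C) {𝒰 : ℕ → Set (Set X)} (h𝒰 : ∀ n, IsOpenCover (𝒰 n)) :
    ∃ W, IsOpen W ∧ C ⊆ W ∧ HasDisjointSelection 𝒰 W := by
  obtain ⟨M, hMcl, hCM, hMfin⟩ := hC.exists_isClosed_cover h𝒰
  have hsel : HasDisjointSelection 𝒰 (⋃ N, M N) :=
    .iUnion Nat.pair Nat.pairEquiv.injective fun N =>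
      hX.hasDisjointSelection_of_isClosed (fun j => (h𝒰 _).1) (hMcl N) fun j =>
        hMfin N _ (Nat.left_le_pair N j)
  obtain ⟨W, hW, hMW, hWsel⟩ := hsel.exists_isOpen_superset
  exact ⟨W, hW, hCM.trans hMW, hWsel⟩

end Hurewicz

theorem scOO_iff_scOFinO_of_Fsigma_hurewicz_kernel_general
    {X : Type*} [TopologicalSpace X] [TopologicalSpace.MetrizableSpace X]
    [TopologicalSpace.SeparableSpace X] (C : Set X)
    (hHur : HurewiczProperty ↥C)
    (hdim : ∀ U : Set X, IsOpen U → C ⊆ U → FiniteCoveringDimension ↥(Uᶜ)) :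
    ScOO X ↔ ScOFinO X := by
  refine ⟨ScOO.scOFinO, fun hX => scOO_iff.2 fun U hU => ?_⟩
  let := TopologicalSpace.metrizableSpaceMetric X
  have := UniformSpace.secondCountable_of_separable X
  obtain ⟨G, hGo, hCG, hG⟩ :=
    hX.exists_isOpen_superset_hasDisjointSelection hHur fun n => hU (2 * n)
  have hGc := (hdim G hGo hCG).scOO.hasDisjointSelection fun n => hU (2 * n + 1)
  simpa using hG.union hGc

/-- Corollary: if a separable metrizable space `X` has an `F_σ` subset `C` such that `C` has
the Hurewicz property and `X \ U` is finite dimensional for every open `U ⊇ C`, then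
`S_c(O,O)` and `S_c(O_fin,O)` are equivalent for `X`. -/
theorem scOO_iff_scOFinO_of_Fsigma_hurewicz_kernel
    {X : Type*} [TopologicalSpace X] [TopologicalSpace.MetrizableSpace X]
    [TopologicalSpace.SeparableSpace X] (C : Set X)
    (hFsigma : ∃ F : ℕ → Set X, (∀ n, IsClosed (F n)) ∧ C = ⋃ n, F n)
    (hHur : HurewiczProperty ↥C)
    (hdim : ∀ U : Set X, IsOpen U → C ⊆ U → FiniteCoveringDimension ↥(Uᶜ)) :
    ScOO X ↔ ScOFinO X :=
  scOO_iff_scOFinO_of_Fsigma_hurewicz_kernel_general C hHur hdim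
end
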